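/- Let Σ be a smooth complete fan in ℤ^n, and let deg : ℚ ⊗ R(Σ) → ℚ be the linear form sending a relation (a_x)_{x ∈ G(Σ)} to Σ_x a_x (this is intersection with the anticanonical class −K = Σ_x V(x); in particular deg(r(P)) = deg P for every primitive collection P). Then deg is strictly positive on every nonzero element of the Mori cone NE(Σ) if and only if every primitive collection of Σ has strictly positive degree. (This is Batyrev's characterization: the associated toric variety is Fano if and only if all primitive collections have strictly positive degree.) -/

import Mathlib

/-!
Both conditions are equivalent to the positivity of `deg` on every wall relation, since these
generate `NE(Σ)`.

If `Σ` is Fano, split a wall relation `u + u' = ∑ b_v v` into `u + u' + ∑ b_v⁻ v = ∑ b_v⁺ v`, an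
equality `∑ d_x x = ∑ e_y y` of nonnegative integral combinations of ray generators, the right one
supported on a cone of the fan and the left one not. Replacing a primitive collection `P` in the
support of `d` by the right-hand side of its primitive relation keeps the sum and lowers `∑ d_x`
by `deg P > 0`. Representations on cones of the fan are unique, so this ends at `e`; hence
`∑ e_y < ∑ d_x`, i.e. `2 - ∑ b_v > 0`.

Conversely, let `φ_σ` be the linear function equal to `1` on the generators of a chamber (maximal
cone) `σ`. Positivity of a wall relation says that on the far side `σ'` of a wall of `σ`, `φ_σ'` is
`≤ 0` on the generator of `σ` left behind; so crossing a wall separating `σ` from `z` increases the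
value at `z`. As there are finitely many chambers, `φ_σ z ≤ φ_ρ z` whenever `z ∈ ρ`, strictly if
`z ∉ σ`. For a primitive relation `∑_{x ∈ P} x = ∑ a_y y` with the `y` in a chamber `τ`,
evaluating `φ_τ` gives `∑ a_y < |P|` because some `x ∈ P` lies outside `τ`.
-/


/-! ## Basic setup: cones and smooth complete fans in `ℤ^n` with ambient space `ℚ^n` -/

/-- The ambient rational vector space `ℚ^n`. -/
abbrev Vec (n : ℕ) := Fin n → ℚ

/-- The lattice `ℤ^n`. -/
abbrev LVec (n : ℕ) := Fin n → ℤ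

/-- The natural inclusion `ℤ^n → ℚ^n`. -/
def toQ {n : ℕ} (v : LVec n) : Vec n := fun i => (v i : ℚ)

/-- The cone generated by a set `S ⊆ ℚ^n`: all nonnegative rational linear
combinations of elements of `S`. -/
def coneGen {n : ℕ} (S : Set (Vec n)) : Set (Vec n) :=
  {x | ∃ (T : Finset (Vec n)) (c : Vec n → ℚ),
    ↑T ⊆ S ∧ (∀ s, 0 ≤ c s) ∧ x = ∑ s ∈ T, c s • s}

/-- `G` is a face of the cone `σ`: it is cut out on `σ` by a linear form
which is nonnegative on `σ`. -/
def IsFaceOf {n : ℕ} (G σ : Set (Vec n)) : Prop :=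
  ∃ u : Vec n →ₗ[ℚ] ℚ, (∀ x ∈ σ, 0 ≤ u x) ∧ G = {x ∈ σ | u x = 0}

/-- A smooth complete fan in `ℤ^n`: a finite collection of cones in `ℚ^n`, each
generated by (the images of) a subset of some `ℤ`-basis of `ℤ^n`, closed under
taking faces, such that the intersection of two cones is a face of each, and whose
union is all of `ℚ^n`. -/
structure IsSmoothCompleteFan {n : ℕ} (F : Set (Set (Vec n))) : Prop where
  finite : F.Finite
  smooth : ∀ σ ∈ F, ∃ (b : Module.Basis (Fin n) ℤ (LVec n)) (I : Finset (Fin n)),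
    σ = coneGen (toQ '' (⇑b '' ↑I))
  faces : ∀ σ ∈ F, ∀ G, IsFaceOf G σ → G ∈ F
  inter : ∀ σ ∈ F, ∀ τ ∈ F, IsFaceOf (σ ∩ τ) σ ∧ IsFaceOf (σ ∩ τ) τ
  covers : ⋃₀ F = Set.univ

/-- A primitive lattice vector. -/
def IsPrimitive {n : ℕ} (v : LVec n) : Prop :=
  v ≠ 0 ∧ ∀ (k : ℤ) (w : LVec n), v = k • w → IsUnit k

/-- `G(Σ)`: the set of primitive lattice generators of the rays of the fan. -/
def gens {n : ℕ} (F : Set (Set (Vec n))) : Set (LVec n) :=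
  {v | IsPrimitive v ∧ coneGen {toQ v} ∈ F}

/-- A primitive collection of the fan `F`: a set `P` of ray generators such that
`P` does not generate a cone of `F`, but every proper subset obtained by removing
one element does. -/
def IsPrimCol {n : ℕ} (F : Set (Set (Vec n))) (P : Finset (LVec n)) : Prop :=
  ↑P ⊆ gens F ∧ coneGen (toQ '' ↑P) ∉ F ∧
    ∀ x ∈ P, coneGen (toQ '' ↑(P.erase x)) ∈ F

/-- `HasPrimRel F P Y a` : the sum of the elements of `P` lies in the relative
interior of the cone of `F` generated by `Y`, with (positive integral) coordinates
`a y` on the generators `y ∈ Y`; i.e. the primitive relation of `P` is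
`∑_{x ∈ P} x = ∑_{y ∈ Y} a y • y`. -/
def HasPrimRel {n : ℕ} (F : Set (Set (Vec n))) (P Y : Finset (LVec n))
    (a : LVec n → ℤ) : Prop :=
  ↑Y ⊆ gens F ∧ coneGen (toQ '' ↑Y) ∈ F ∧ (∀ y ∈ Y, 0 < a y) ∧
    ∑ x ∈ P, x = ∑ y ∈ Y, a y • y

/-- The degree of a primitive collection `P` with primitive relation data `(Y, a)`:
`deg P = |P| - ∑ a_y`. -/
def degOf {n : ℕ} (P Y : Finset (LVec n)) (a : LVec n → ℤ) : ℤ :=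
  (P.card : ℤ) - ∑ y ∈ Y, a y

/-- A fan is Fano if every primitive collection has strictly positive degree
(Batyrev's criterion). -/
def IsFano {n : ℕ} (F : Set (Set (Vec n))) : Prop :=
  ∀ P Y a, IsPrimCol F P → HasPrimRel F P Y a → 0 < degOf P Y a

/-- The star subdivision of the fan `F` at the cone generated by `T`, with new ray
generated by `x = ∑_{t ∈ T} t`: its cones are the cones of `F` not containing the
cone of `T`, together with the cones generated by `{x} ∪ A` where `A` runs over the
generator sets of those faces, not containing the cone of `T`, of the cones of `F`
containing the cone of `T`. -/
def starSubdiv {n : ℕ} (F : Set (Set (Vec n))) (T : Finset (LVec n)) :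
    Set (Set (Vec n)) :=
  {σ ∈ F | ¬ coneGen (toQ '' ↑T) ⊆ σ} ∪
  {ρ | ∃ A : Finset (LVec n), ↑A ⊆ gens F ∧
      (∃ σ ∈ F, coneGen (toQ '' ↑T) ⊆ σ ∧ IsFaceOf (coneGen (toQ '' (↑A : Set (LVec n)))) σ) ∧
      ¬ coneGen (toQ '' ↑T) ⊆ coneGen (toQ '' (↑A : Set (LVec n))) ∧
      ρ = coneGen (toQ '' ↑(insert (∑ t ∈ T, t) A : Finset (LVec n)))}

/-- `F'` is obtained from `F` by a star subdivision at a cone of `F` of dimension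
at least `2` (equivalently, the associated toric morphism is a blow-up along a
smooth invariant center). -/
def IsBlowup {n : ℕ} (F' F : Set (Set (Vec n))) : Prop :=
  ∃ T : Finset (LVec n), ↑T ⊆ gens F ∧ 2 ≤ T.card ∧
    coneGen (toQ '' ↑T) ∈ F ∧ F' = starSubdiv F T

/-- The fan `F'` refines the fan `F`: every cone of `F'` is contained in a cone
of `F`. -/
def Refines {n : ℕ} (F' F : Set (Set (Vec n))) : Prop :=
  ∀ σ' ∈ F', ∃ σ ∈ F, σ' ⊆ σ


/-! ## Relations, wall relations and the Mori cone -/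

/-- Integral (or rational) relations among the ray generators are identified with
finitely supported functions `ℤ^n →₀ ℚ`; the relation `(a_x)` corresponds to
`∑ a_x • x = 0`.  The convex cone generated by a set `S` of such relations:
all finite nonnegative rational combinations of elements of `S`. -/
def qCone {n : ℕ} (S : Set (LVec n →₀ ℚ)) : Set (LVec n →₀ ℚ) :=
  {x | ∃ (G : Finset (LVec n →₀ ℚ)) (c : (LVec n →₀ ℚ) → ℚ),
    ↑G ⊆ S ∧ (∀ w, 0 ≤ c w) ∧ x = ∑ w ∈ G, c w • w}

/-- The primitive relation `r(P)` of a primitive collection `P` with relation data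
`(Y, a)`: coordinate `1` at each `x ∈ P` and `-a y` at each `y ∈ Y`. -/
noncomputable def primRelVec {n : ℕ} (P Y : Finset (LVec n)) (a : LVec n → ℤ) : LVec n →₀ ℚ :=
  (∑ x ∈ P, Finsupp.single x (1 : ℚ)) - ∑ y ∈ Y, Finsupp.single y (a y : ℚ)

/-- `r` is a wall relation of the fan `F`: there is a wall (an `(n-1)`-dimensional
cone of `F` generated by `U`) which is a common facet of the two `n`-dimensional
cones generated by `U ∪ {u}` and `U ∪ {u'}`, with the integral relation
`u + u' = ∑_{v ∈ U} b v • v`, and `r` has coordinate `1` at `u` and `u'` and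
`-b v` at each `v ∈ U`. -/
def IsWallRel {n : ℕ} (F : Set (Set (Vec n))) (r : LVec n →₀ ℚ) : Prop :=
  ∃ (U : Finset (LVec n)) (u u' : LVec n) (b : LVec n → ℤ),
    ↑U ⊆ gens F ∧ U.card = n - 1 ∧ u ∈ gens F ∧ u' ∈ gens F ∧
    u ∉ U ∧ u' ∉ U ∧ u ≠ u' ∧
    coneGen (toQ '' ↑U) ∈ F ∧
    coneGen (toQ '' ↑(insert u U : Finset (LVec n))) ∈ F ∧
    coneGen (toQ '' ↑(insert u' U : Finset (LVec n))) ∈ F ∧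
    u + u' = ∑ v ∈ U, b v • v ∧
    r = Finsupp.single u 1 + Finsupp.single u' 1
        - ∑ v ∈ U, Finsupp.single v (b v : ℚ)

/-- The Mori cone `NE(Σ)`: the convex cone generated by the wall relations of the
fan (it equals the cone of effective 1-cycles of the associated toric variety). -/
def MoriCone {n : ℕ} (F : Set (Set (Vec n))) : Set (LVec n →₀ ℚ) :=
  qCone {r | IsWallRel F r}

/-- The set of primitive relations `r(P)` of the fan `F`, `P` ranging over the
primitive collections of `F`. -/
def PrimRels {n : ℕ} (F : Set (Set (Vec n))) : Set (LVec n →₀ ℚ) :=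
  {r | ∃ P Y a, IsPrimCol F P ∧ HasPrimRel F P Y a ∧ r = primRelVec P Y a}

/-- The degree linear form on relations: `(a_x) ↦ ∑_x a_x`; this is intersection
with the anticanonical class `-K = ∑_x V(x)`. -/
def degMap {n : ℕ} (r : LVec n →₀ ℚ) : ℚ := r.sum fun _ c => c

/-- A smooth complete fan is projective if it carries a support function
`ψ : ℚ^n → ℚ` that is linear on each cone, convex (subadditive and positively
homogeneous), and strictly convex with respect to the fan: for each
`n`-dimensional cone `σ` with linear function `l` agreeing with `ψ` on `σ`,
`l < ψ` outside `σ`. -/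
def IsProjectiveFan {n : ℕ} (F : Set (Set (Vec n))) : Prop :=
  ∃ ψ : Vec n → ℚ,
    (∀ σ ∈ F, ∃ l : Vec n →ₗ[ℚ] ℚ, ∀ x ∈ σ, ψ x = l x) ∧
    (∀ x y : Vec n, ψ (x + y) ≤ ψ x + ψ y) ∧
    (∀ t : ℚ, 0 ≤ t → ∀ x : Vec n, ψ (t • x) = t * ψ x) ∧
    (∀ σ ∈ F, Submodule.span ℚ σ = ⊤ →
      ∀ l : Vec n →ₗ[ℚ] ℚ, (∀ x ∈ σ, ψ x = l x) → ∀ x ∉ σ, l x < ψ x)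

/-- A nonzero element `v` of the convex cone `C` spans an extremal ray of `C`:
whenever `v = v₁ + v₂` with `v₁, v₂ ∈ C`, both summands are nonnegative rational
multiples of `v`. -/
def SpansExtremalRay {n : ℕ} (C : Set (LVec n →₀ ℚ)) (v : LVec n →₀ ℚ) : Prop :=
  v ≠ 0 ∧ v ∈ C ∧ ∀ v₁ ∈ C, ∀ v₂ ∈ C, v = v₁ + v₂ →
    ∃ t₁ t₂ : ℚ, 0 ≤ t₁ ∧ 0 ≤ t₂ ∧ v₁ = t₁ • v ∧ v₂ = t₂ • v

lemma Finsupp.support_sum_single_subset {ι α M : Type*} [AddCommMonoid M] [DecidableEq α]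
    (s : Finset ι) (g : ι → α) (f : ι → M) :
    (∑ i ∈ s, Finsupp.single (g i) (f i)).support ⊆ s.image g :=
  Finsupp.support_finsetSum.trans <| Finset.biUnion_subset.mpr fun _ hi =>
    Finsupp.support_single_subset.trans <|
      Finset.singleton_subset_iff.mpr (Finset.mem_image_of_mem g hi)

lemma Finset.sum_image_extend_zero {ι α β M : Type*} [AddCommMonoid M] [DecidableEq α] [Zero β]
    {f : ι → α} (hf : Function.Injective f) (s : Finset ι) (g : ι → β) (h : α → β → M) :
    ∑ a ∈ s.image f, h a (Function.extend f g 0 a) = ∑ i ∈ s, h (f i) (g i) := by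
  rw [Finset.sum_image fun _ _ _ _ hij => hf hij]
  simp only [hf.extend_apply]

lemma Finset.exists_image_erase_eq {ι α : Type*} [Fintype ι] [DecidableEq ι] [DecidableEq α]
    {f g : ι → α} (hf : Function.Injective f) (hg : Function.Injective g) {i : ι}
    (h : (Finset.univ.erase i).image f ⊆ Finset.univ.image g) :
    ∃ j, (Finset.univ.erase j).image g = (Finset.univ.erase i).image f := by
  have hcard_erase (k : ι) {h : ι → α} (hh : Function.Injective h) :
      ((Finset.univ.erase k).image h).card + 1 = Fintype.card ι := by
    rw [Finset.card_image_of_injective _ hh, Finset.card_erase_add_one (Finset.mem_univ k),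
      Finset.card_univ]
  have hcard_univ : (Finset.univ.image g).card = Fintype.card ι := by
    rw [Finset.card_image_of_injective _ hg, Finset.card_univ]
  obtain ⟨x, hx, hxf⟩ := Finset.exists_mem_notMem_of_card_lt_card
    (s := (Finset.univ.erase i).image f) (t := Finset.univ.image g)
    (by have := hcard_erase i hf; omega)
  obtain ⟨j, -, rfl⟩ := Finset.mem_image.mp hx
  refine ⟨j, (Finset.eq_of_subset_of_card_le (fun y hy => ?_) ?_).symm⟩
  · obtain ⟨j', -, rfl⟩ := Finset.mem_image.mp (h hy)
    exact Finset.mem_image_of_mem g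
      (Finset.mem_erase.mpr ⟨fun hj => hxf (hj ▸ hy), Finset.mem_univ _⟩)
  · have := hcard_erase i hf
    have := hcard_erase j hg
    omega

lemma LinearMap.eq_zero_of_sum_smul_eq_zero {M ι : Type*} [AddCommGroup M] [Module ℚ M]
    (ℓ : M →ₗ[ℚ] ℚ) {s : Finset ι} {v : ι → M} {c : ι → ℚ} (hℓ : ∀ i ∈ s, 0 ≤ ℓ (v i))
    (hc : ∀ i ∈ s, 0 ≤ c i) (h : ℓ (∑ i ∈ s, c i • v i) = 0) {i : ι} (hi : i ∈ s)
    (hci : 0 < c i) : ℓ (v i) = 0 := by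
  simp only [map_sum, map_smul, smul_eq_mul] at h
  have := (Finset.sum_eq_zero_iff_of_nonneg fun j hj => mul_nonneg (hc j hj) (hℓ j hj)).mp h i hi
  exact (mul_eq_zero.mp this).resolve_left hci.ne'

lemma Module.Basis.repr_apply_eq_mul_of_repr_eq_zero {ι R M : Type*} [Fintype ι] [CommSemiring R]
    [AddCommMonoid M] [Module R M] (b β : Module.Basis ι R M) {i j : ι}
    (h : ∀ j' ≠ j, b.repr (β j') i = 0) (x : M) :
    b.repr x i = β.repr x j * b.repr (β j) i := by
  conv_lhs => rw [← β.sum_repr x]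
  simp only [map_sum, map_smul, Finsupp.finsetSum_apply, Finsupp.smul_apply, smul_eq_mul]
  exact Finset.sum_eq_single j (fun j' _ hj' => by rw [h j' hj', mul_zero])
    (fun hj => absurd (Finset.mem_univ j) hj)

lemma Module.Basis.add_eq_sum_erase_of_repr_eq_neg_one {ι R M : Type*} [Fintype ι] [DecidableEq ι]
    [Ring R] [AddCommGroup M] [Module R M] (b : Module.Basis ι R M) {i : ι} {u : M}
    (h : b.repr u i = -1) : b i + u = ∑ k ∈ Finset.univ.erase i, b.repr u k • b k := by
  conv_lhs => rw [← b.sum_repr u, ← Finset.add_sum_erase _ _ (Finset.mem_univ i), h, neg_one_smul]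
  abel

variable {n : ℕ}

section Lattice

lemma toQ_injective : Function.Injective (toQ (n := n)) := fun _ _ h =>
  funext fun i => by simpa [toQ] using congrFun h i

def toQHom : LVec n →+ Vec n := (Int.castAddHom ℚ).compLeft (Fin n)

lemma toQ_zero : toQ (0 : LVec n) = 0 := map_zero toQHom

lemma toQ_add (v w : LVec n) : toQ (v + w) = toQ v + toQ w := map_add toQHom v w

lemma toQ_zsmul (k : ℤ) (v : LVec n) : toQ (k • v) = (k : ℚ) • toQ v := by
  funext i; simp [toQ]

lemma toQ_nsmul (k : ℕ) (v : LVec n) : toQ (k • v) = (k : ℚ) • toQ v := by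
  funext i; simp [toQ]

lemma toQ_sum {ι : Type*} (s : Finset ι) (f : ι → LVec n) :
    toQ (∑ i ∈ s, f i) = ∑ i ∈ s, toQ (f i) := map_sum toQHom f s

lemma toQ_ne_zero {v : LVec n} (hv : v ≠ 0) : toQ v ≠ 0 := fun h =>
  hv (toQ_injective (h.trans toQ_zero.symm))

lemma toQ_linearCombination (d : LVec n →₀ ℕ) :
    toQ (Finsupp.linearCombination ℕ id d) = ∑ x ∈ d.support, (d x : ℚ) • toQ x := by
  rw [Finsupp.linearCombination_apply, Finsupp.sum, toQ_sum]
  exact Finset.sum_congr rfl fun x _ => toQ_nsmul _ _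

lemma repr_linearCombination_of_support_subset (b : Module.Basis (Fin n) ℤ (LVec n))
    {d : LVec n →₀ ℕ} (hd : ↑d.support ⊆ Set.range b) (i : Fin n) :
    b.repr (Finsupp.linearCombination ℕ id d) i = d (b i) := by
  rw [Finsupp.linearCombination_apply, Finsupp.sum, map_sum, Finsupp.finsetSum_apply,
    Finset.sum_eq_single (b i)]
  · rw [id, map_nsmul, Finsupp.smul_apply, Module.Basis.repr_self, Finsupp.single_eq_same,
      nsmul_eq_mul, mul_one]
  · intro x hx hne
    obtain ⟨k, rfl⟩ := hd hx
    have hki : k ≠ i := fun h => hne (congrArg b h)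
    rw [id, map_nsmul, Finsupp.smul_apply, Module.Basis.repr_self, Finsupp.single_apply,
      if_neg hki, smul_zero]
  · intro h
    simp [Finsupp.notMem_support_iff.mp h]

lemma isPrimitive_basis (b : Module.Basis (Fin n) ℤ (LVec n)) (i : Fin n) :
    IsPrimitive (b i) := by
  refine ⟨b.ne_zero i, fun k w hkw => IsUnit.of_mul_eq_one (b.repr w i) ?_⟩
  have h := congrArg (fun v => b.repr v i) hkw
  simp only [Module.Basis.repr_self, Finsupp.single_eq_same, map_smul, Finsupp.smul_apply,
    smul_eq_mul] at h
  exact h.symm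

lemma IsPrimitive.eq_of_smul_eq_smul {x y : LVec n} (hx : IsPrimitive x) (hy : IsPrimitive y)
    {p q : ℤ} (hp : 0 < p) (hq : 0 < q) (hpq : IsCoprime q p) (h : q • y = p • x) : y = x := by
  have hdvd (k : Fin n) : q ∣ x k := hpq.dvd_of_dvd_mul_left ⟨y k, (congrFun h k).symm⟩
  have hq1 : q = 1 := by
    have := hx.2 q (fun k => x k / q) (funext fun k => (Int.mul_ediv_cancel' (hdvd k)).symm)
    rcases Int.isUnit_iff.mp this with h1 | h1 <;> omega
  subst hq1
  rw [one_smul] at h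
  have hp1 : p = 1 := by
    rcases Int.isUnit_iff.mp (hy.2 p x h) with h1 | h1 <;> omega
  rwa [hp1, one_smul] at h

lemma IsPrimitive.eq_of_toQ_eq_smul {x y : LVec n} (hx : IsPrimitive x) (hy : IsPrimitive y)
    {c : ℚ} (hc : 0 < c) (h : toQ y = c • toQ x) : y = x := by
  refine hx.eq_of_smul_eq_smul hy (Rat.num_pos.mpr hc) (by exact_mod_cast c.den_pos)
    (Rat.isCoprime_num_den c).symm (toQ_injective ?_)
  rw [toQ_zsmul, toQ_zsmul, h, smul_smul]
  push_cast
  rw [Rat.den_mul_eq_num]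

end Lattice

section Cone

lemma subset_coneGen (S : Set (Vec n)) : S ⊆ coneGen S := by
  classical
  intro s hs
  refine ⟨{s}, fun _ => 1, by simpa using hs, fun _ => zero_le_one, by simp⟩

lemma toQ_mem_coneGen {A : Finset (LVec n)} {x : LVec n} (hx : x ∈ A) :
    toQ x ∈ coneGen (toQ '' ↑A) :=
  subset_coneGen _ ⟨x, hx, rfl⟩

lemma sum_smul_mem_coneGen (A : Finset (LVec n)) {c : LVec n → ℚ} (hc : ∀ x ∈ A, 0 ≤ c x) :
    ∑ x ∈ A, c x • toQ x ∈ coneGen (toQ '' ↑A) := by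
  classical
  refine ⟨A.image toQ, fun s => ∑ x ∈ A with toQ x = s, c x, by simp,
    fun s => Finset.sum_nonneg fun x hx => hc x (Finset.mem_filter.mp hx).1, ?_⟩
  rw [Finset.sum_image fun x _ y _ h => toQ_injective h]
  refine Finset.sum_congr rfl fun x hx => ?_
  simp [toQ_injective.eq_iff, Finset.filter_eq', hx]

lemma exists_sum_smul_of_mem_coneGen {A : Finset (LVec n)} {z : Vec n}
    (hz : z ∈ coneGen (toQ '' ↑A)) :
    ∃ c : LVec n → ℚ, (∀ x, 0 ≤ c x) ∧ z = ∑ x ∈ A, c x • toQ x := by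
  classical
  obtain ⟨T, c, hT, hc, rfl⟩ := hz
  have hinj : Set.InjOn toQ (toQ ⁻¹' (T : Set (Vec n))) := toQ_injective.injOn
  have hTA : T.preimage toQ hinj ⊆ A := fun x hx => by
    obtain ⟨y, hy, hyx⟩ := hT (Finset.mem_coe.mpr (Finset.mem_preimage.mp hx))
    rwa [← toQ_injective hyx]
  refine ⟨fun x => if toQ x ∈ T then c (toQ x) else 0,
    fun x => by dsimp only; split_ifs <;> simp [hc], ?_⟩
  have hrange : ∀ s ∈ T, s ∉ Set.range toQ → c s • s = 0 := fun s hs hs' => by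
    obtain ⟨y, -, rfl⟩ := hT hs
    exact absurd ⟨y, rfl⟩ hs'
  rw [← Finset.sum_preimage toQ T hinj _ hrange, ← Finset.sum_subset hTA]
  · exact Finset.sum_congr rfl fun x hx => by simp [Finset.mem_preimage.mp hx]
  · intro x _ hx
    simp [Finset.mem_preimage.not.mp hx]

lemma mem_coneGen_singleton_iff {v z : Vec n} :
    z ∈ coneGen {v} ↔ ∃ c : ℚ, 0 ≤ c ∧ z = c • v := by
  constructor
  · rintro ⟨T, c, hT, hc, rfl⟩
    rcases Finset.subset_singleton_iff.mp (fun t ht => by simpa using hT ht) with rfl | rfl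
    · exact ⟨0, le_rfl, by simp⟩
    · exact ⟨c v, hc v, by simp⟩
  · rintro ⟨c, hc, rfl⟩
    exact ⟨{v}, fun _ => c, by simp, fun _ => hc, by simp⟩

end Cone

section RationalBasis

lemma top_le_span_toQ_basis (b : Module.Basis (Fin n) ℤ (LVec n)) :
    ⊤ ≤ Submodule.span ℚ (Set.range fun i => toQ (b i)) := by
  have hlattice (w : LVec n) : toQ w ∈ Submodule.span ℚ (Set.range fun i => toQ (b i)) := by
    rw [← b.sum_repr w, toQ_sum]
    refine Submodule.sum_mem _ fun i _ => ?_
    rw [toQ_zsmul]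
    exact Submodule.smul_mem _ _ (Submodule.subset_span ⟨i, rfl⟩)
  intro x _
  rw [pi_eq_sum_univ x]
  refine Submodule.sum_mem _ fun j _ => Submodule.smul_mem _ _ ?_
  convert hlattice (Pi.single j 1) using 1
  funext k
  simp [toQ, Pi.single_apply, eq_comm]

noncomputable def qBasis (b : Module.Basis (Fin n) ℤ (LVec n)) : Module.Basis (Fin n) ℚ (Vec n) :=
  basisOfTopLeSpanOfCardEqFinrank (fun i => toQ (b i)) (top_le_span_toQ_basis b)
    (by simp [Module.finrank_fintype_fun_eq_card])

variable (b : Module.Basis (Fin n) ℤ (LVec n))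

lemma qBasis_apply (i : Fin n) : qBasis b i = toQ (b i) := by
  rw [qBasis, coe_basisOfTopLeSpanOfCardEqFinrank]

lemma qBasis_repr_toQ (x : LVec n) (i : Fin n) :
    (qBasis b).repr (toQ x) i = b.repr x i := by
  have hx : toQ x = ∑ j, (b.repr x j : ℚ) • qBasis b j := by
    conv_lhs => rw [← b.sum_repr x]
    simp only [toQ_sum, toQ_zsmul, qBasis_apply]
  rw [hx, (qBasis b).repr_sum_self]

lemma qBasis_sumCoords_toQ_apply (i : Fin n) : (qBasis b).sumCoords (toQ (b i)) = 1 := by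
  rw [← qBasis_apply, Module.Basis.sumCoords_self_apply]

lemma mem_coneGen_basis_iff (I : Finset (Fin n)) (z : Vec n) :
    z ∈ coneGen (toQ '' (⇑b '' ↑I)) ↔
      (∀ i, 0 ≤ (qBasis b).repr z i) ∧ ∀ i ∉ I, (qBasis b).repr z i = 0 := by
  classical
  rw [← Finset.coe_image]
  have hsum (c : LVec n → ℚ) :
      ∑ x ∈ I.image b, c x • toQ x = ∑ i, (if i ∈ I then c (b i) else 0) • qBasis b i := by
    rw [Finset.sum_image fun _ _ _ _ h => b.injective h]
    simp [ite_smul, Finset.sum_ite_mem, qBasis_apply]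
  constructor
  · intro hz
    obtain ⟨c, hc, rfl⟩ := exists_sum_smul_of_mem_coneGen hz
    rw [hsum, (qBasis b).repr_sum_self]
    exact ⟨fun i => by split_ifs <;> simp [hc], fun i hi => by simp [hi]⟩
  · rintro ⟨hpos, hzero⟩
    set c := Function.extend b (fun i => (qBasis b).repr z i) 0
    have hc (i : Fin n) : c (b i) = (qBasis b).repr z i := b.injective.extend_apply _ _ i
    convert sum_smul_mem_coneGen (I.image b) (c := c) ?_
    · rw [hsum]
      conv_lhs => rw [← (qBasis b).sum_repr z]
      refine Finset.sum_congr rfl fun i _ => ?_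
      split_ifs with hi
      · rw [hc]
      · rw [hzero i hi]
    · simp only [Finset.mem_image]
      rintro _ ⟨i, -, rfl⟩
      exact (hc i).symm ▸ hpos i

lemma sum_repr_smul_eq_of_mem_coneGen {I : Finset (Fin n)} {z : Vec n}
    (hz : z ∈ coneGen (toQ '' (⇑b '' ↑I))) :
    ∑ i ∈ I, (qBasis b).repr z i • toQ (b i) = z := by
  conv_rhs => rw [← (qBasis b).sum_repr z]
  refine Finset.sum_subset (Finset.subset_univ I) (fun i _ hi => ?_) |>.trans ?_
  · rw [((mem_coneGen_basis_iff b I z).mp hz).2 i hi, zero_smul]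
  · simp [qBasis_apply]

lemma isClosed_coneGen_basis (I : Finset (Fin n)) :
    IsClosed (coneGen (toQ '' (⇑b '' ↑I))) := by
  have hcont (i : Fin n) : Continuous ((qBasis b).coord i) := LinearMap.continuous_on_pi _
  have hcone : coneGen (toQ '' (⇑b '' ↑I)) =
      (⋂ i, {z | 0 ≤ (qBasis b).coord i z}) ∩ ⋂ i ∉ I, {z | (qBasis b).coord i z = 0} := by
    ext z
    simp [mem_coneGen_basis_iff]
  rw [hcone]
  exact (isClosed_iInter fun i => isClosed_le continuous_const (hcont i)).inter
    (isClosed_biInter fun i _ => isClosed_eq (hcont i) continuous_const)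

end RationalBasis

lemma exists_isPrimCol_subset {F : Set (Set (Vec n))} {D : Finset (LVec n)}
    (hD : ↑D ⊆ gens F) (hDF : coneGen (toQ '' ↑D) ∉ F) : ∃ P ⊆ D, IsPrimCol F P := by
  classical
  obtain ⟨P, hP, hmin⟩ := Finset.exists_min_image
    (D.powerset.filter fun P : Finset (LVec n) => coneGen (toQ '' (↑P : Set (LVec n))) ∉ F)
    Finset.card
    ⟨D, Finset.mem_filter.mpr ⟨Finset.mem_powerset_self D, hDF⟩⟩
  obtain ⟨hPD, hPF⟩ := Finset.mem_filter.mp hP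
  have hPD := Finset.mem_powerset.mp hPD
  refine ⟨P, hPD, fun x hx => hD (hPD hx), hPF, fun x hx => by_contra fun hxF => ?_⟩
  have := hmin (P.erase x) (Finset.mem_filter.mpr
    ⟨Finset.mem_powerset.mpr ((P.erase_subset x).trans hPD), hxF⟩)
  rw [Finset.card_erase_of_mem hx] at this
  have := Finset.card_pos.mpr ⟨x, hx⟩
  omega

namespace IsSmoothCompleteFan

variable {F : Set (Set (Vec n))}

lemma coneGen_basis_mem_of_subset (hF : IsSmoothCompleteFan F)
    {b : Module.Basis (Fin n) ℤ (LVec n)} {I J : Finset (Fin n)}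
    (hσ : coneGen (toQ '' (⇑b '' ↑I)) ∈ F) (hJ : J ⊆ I) :
    coneGen (toQ '' (⇑b '' ↑J)) ∈ F := by
  classical
  -- the face cut out by the sum of the coordinates indexed by `I \ J`
  refine hF.faces _ hσ _ ⟨∑ i ∈ I \ J, (qBasis b).coord i, fun x hx => ?_, ?_⟩
  · simp only [LinearMap.sum_apply, Module.Basis.coord_apply]
    exact Finset.sum_nonneg fun i _ => ((mem_coneGen_basis_iff b I x).mp hx).1 i
  · ext x
    simp only [Set.mem_ofPred_eq, mem_coneGen_basis_iff, LinearMap.sum_apply,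
      Module.Basis.coord_apply]
    constructor
    · rintro ⟨hpos, hzero⟩
      exact ⟨⟨hpos, fun i hi => hzero i fun hiJ => hi (hJ hiJ)⟩,
        Finset.sum_eq_zero fun i hi => hzero i (Finset.mem_sdiff.mp hi).2⟩
    · rintro ⟨⟨hpos, hzero⟩, hsum⟩
      have hIJ := (Finset.sum_eq_zero_iff_of_nonneg fun i _ => hpos i).mp hsum
      refine ⟨hpos, fun i hi => ?_⟩
      by_cases hiI : i ∈ I
      · exact hIJ i (Finset.mem_sdiff.mpr ⟨hiI, hi⟩)
      · exact hzero i hiI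

lemma basis_mem_gens (hF : IsSmoothCompleteFan F) {b : Module.Basis (Fin n) ℤ (LVec n)}
    {I : Finset (Fin n)} (hσ : coneGen (toQ '' (⇑b '' ↑I)) ∈ F) {i : Fin n} (hi : i ∈ I) :
    b i ∈ gens F := by
  refine ⟨isPrimitive_basis b i, ?_⟩
  simpa using hF.coneGen_basis_mem_of_subset hσ (J := {i}) (by simpa using hi)

lemma coneGen_subset_of_sum_smul_mem (hF : IsSmoothCompleteFan F) {A : Finset (LVec n)}
    {τ : Set (Vec n)} (hA : coneGen (toQ '' ↑A) ∈ F) (hτ : τ ∈ F) {c : LVec n → ℚ}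
    (hc : ∀ x ∈ A, 0 < c x) (hmem : ∑ x ∈ A, c x • toQ x ∈ τ) :
    coneGen (toQ '' ↑A) ⊆ τ := by
  obtain ⟨ℓ, hℓ, hface⟩ := (hF.inter _ hA τ hτ).1
  have hinter {z : Vec n} (hz : z ∈ coneGen (toQ '' ↑A) ∩ τ) : ℓ z = 0 := by
    rw [hface] at hz; exact hz.2
  have hgen (x : LVec n) (hx : x ∈ A) : ℓ (toQ x) = 0 :=
    ℓ.eq_zero_of_sum_smul_eq_zero (fun y hy => hℓ _ (toQ_mem_coneGen hy))
      (fun y hy => (hc y hy).le)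
      (hinter ⟨sum_smul_mem_coneGen A fun y hy => (hc y hy).le, hmem⟩) hx (hc x hx)
  intro z hz
  have hz' : z ∈ {z ∈ coneGen (toQ '' ↑A) | ℓ z = 0} := by
    obtain ⟨d, -, rfl⟩ := exists_sum_smul_of_mem_coneGen hz
    refine ⟨hz, ?_⟩
    rw [map_sum]
    exact Finset.sum_eq_zero fun x hx => by rw [map_smul, hgen x hx, smul_zero]
  rw [← hface] at hz'
  exact hz'.2

lemma mem_image_of_toQ_mem (hF : IsSmoothCompleteFan F) {b : Module.Basis (Fin n) ℤ (LVec n)}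
    {I : Finset (Fin n)} (hσ : coneGen (toQ '' (⇑b '' ↑I)) ∈ F) {x : LVec n} (hx : x ∈ gens F)
    (hxσ : toQ x ∈ coneGen (toQ '' (⇑b '' ↑I))) : x ∈ ⇑b '' ↑I := by
  have hray : coneGen (toQ '' ↑({x} : Finset (LVec n))) = coneGen {toQ x} := by simp
  have hsub : coneGen {toQ x} ⊆ coneGen (toQ '' (⇑b '' ↑I)) := by
    rw [← hray]
    exact hF.coneGen_subset_of_sum_smul_mem (hray ▸ hx.2) hσ (c := fun _ => 1) (by simp)
      (by simpa using hxσ)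
  -- the ray of `x` is a face of the cone, cut out by `m`; as `m ≥ 0` on the generators and
  -- `m x = 0`, the generators with positive coefficient in `x` lie on the ray
  obtain ⟨m, hm, hface⟩ := (hF.inter _ hσ _ hx.2).1
  rw [Set.inter_eq_self_of_subset_right hsub] at hface
  obtain ⟨j, hj⟩ := Finsupp.ne_iff.mp
    ((qBasis b).repr.map_ne_zero_iff.mpr (toQ_ne_zero hx.1.1))
  have hcoords := (mem_coneGen_basis_iff b I _).mp hxσ
  have hjI : j ∈ I := by_contra fun h => hj (hcoords.2 j h)
  have hxface : toQ x ∈ {z ∈ coneGen (toQ '' (⇑b '' ↑I)) | m z = 0} :=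
    hface ▸ subset_coneGen _ rfl
  have hmj : m (toQ (b j)) = 0 :=
    m.eq_zero_of_sum_smul_eq_zero (fun i hi => hm _ (subset_coneGen _ ⟨b i, ⟨i, hi, rfl⟩, rfl⟩))
      (fun i _ => hcoords.1 i) (by rw [sum_repr_smul_eq_of_mem_coneGen b hxσ]; exact hxface.2)
      hjI ((hcoords.1 j).lt_of_ne' hj)
  have hbj : toQ (b j) ∈ coneGen {toQ x} :=
    hface ▸ ⟨subset_coneGen _ ⟨b j, ⟨j, hjI, rfl⟩, rfl⟩, hmj⟩
  obtain ⟨c, hc, hcx⟩ := mem_coneGen_singleton_iff.mp hbj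
  have hc0 : c ≠ 0 := by
    rintro rfl
    exact toQ_ne_zero (b.ne_zero j) (by simpa using hcx)
  exact ⟨j, hjI, hx.1.eq_of_toQ_eq_smul (isPrimitive_basis b j) (hc.lt_of_ne' hc0) hcx⟩

lemma coneGen_mem_of_forall_toQ_mem (hF : IsSmoothCompleteFan F) {σ : Set (Vec n)} (hσ : σ ∈ F)
    {A : Finset (LVec n)} (hA : ↑A ⊆ gens F) (hAσ : ∀ x ∈ A, toQ x ∈ σ) :
    coneGen (toQ '' ↑A) ∈ F := by
  classical
  obtain ⟨b, I, rfl⟩ := hF.smooth σ hσ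
  have himage : ⇑b '' ↑(I.filter (b · ∈ A)) = (↑A : Set (LVec n)) := by
    ext x
    simp only [Finset.coe_filter, Set.mem_image, Set.mem_ofPred_eq, Finset.mem_coe]
    constructor
    · rintro ⟨i, ⟨-, hi⟩, rfl⟩
      exact hi
    · intro hx
      obtain ⟨i, hi, rfl⟩ := hF.mem_image_of_toQ_mem hσ (hA hx) (hAσ _ hx)
      exact ⟨i, ⟨hi, hx⟩, rfl⟩
  rw [← himage]
  exact hF.coneGen_basis_mem_of_subset hσ (Finset.filter_subset _ _)

lemma exists_linearCombination_eq (hF : IsSmoothCompleteFan F) (q : LVec n) :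
    ∃ y : LVec n →₀ ℕ, ↑y.support ⊆ gens F ∧ coneGen (toQ '' ↑y.support) ∈ F ∧
      Finsupp.linearCombination ℕ id y = q := by
  classical
  obtain ⟨σ, hσ, hqσ⟩ : toQ q ∈ ⋃₀ F := hF.covers ▸ Set.mem_univ _
  obtain ⟨b, I, rfl⟩ := hF.smooth σ hσ
  have hcoords := (mem_coneGen_basis_iff b I _).mp hqσ
  simp only [qBasis_repr_toQ, Int.cast_eq_zero] at hcoords
  set y : LVec n →₀ ℕ := ∑ i ∈ I, Finsupp.single (b i) (b.repr q i).toNat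
  have hyI : ↑y.support ⊆ ⇑b '' ↑I := by
    rw [← Finset.coe_image]
    exact Finset.coe_subset.mpr (Finsupp.support_sum_single_subset I b _)
  have hyg : ↑y.support ⊆ gens F := by
    rintro _ hx
    obtain ⟨i, hi, rfl⟩ := hyI hx
    exact hF.basis_mem_gens hσ hi
  refine ⟨y, hyg, hF.coneGen_mem_of_forall_toQ_mem hσ hyg
    fun x hx => subset_coneGen _ ⟨x, hyI hx, rfl⟩, ?_⟩
  conv_rhs => rw [← b.sum_repr q]
  rw [← Finset.sum_subset (Finset.subset_univ I) fun i _ hi => by rw [hcoords.2 i hi, zero_smul]]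
  simp only [y, map_sum, Finsupp.linearCombination_single, id]
  refine Finset.sum_congr rfl fun i _ => ?_
  rw [← natCast_zsmul, Int.toNat_of_nonneg (by exact_mod_cast hcoords.1 i)]

lemma eq_of_linearCombination_eq (hF : IsSmoothCompleteFan F) {d e : LVec n →₀ ℕ}
    (hd : ↑d.support ⊆ gens F) (he : ↑e.support ⊆ gens F)
    (hdF : coneGen (toQ '' ↑d.support) ∈ F) (heF : coneGen (toQ '' ↑e.support) ∈ F)
    (h : Finsupp.linearCombination ℕ id d = Finsupp.linearCombination ℕ id e) : d = e := by
  obtain ⟨b, I, hrep⟩ := hF.smooth _ heF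
  have hpos {f : LVec n →₀ ℕ} : ∀ x ∈ f.support, (0 : ℚ) < f x := fun x hx => by
    exact_mod_cast Nat.pos_of_ne_zero (Finsupp.mem_support_iff.mp hx)
  have hsub : coneGen (toQ '' (↑d.support : Set (LVec n))) ⊆ coneGen (toQ '' ↑e.support) := by
    refine hF.coneGen_subset_of_sum_smul_mem hdF heF hpos ?_
    rw [← toQ_linearCombination, h, toQ_linearCombination]
    exact sum_smul_mem_coneGen _ fun x hx => (hpos x hx).le
  have hrange {f : LVec n →₀ ℕ} (hf : ↑f.support ⊆ gens F)
      (hfσ : coneGen (toQ '' (↑f.support : Set (LVec n))) ⊆ coneGen (toQ '' ↑e.support)) :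
      ↑f.support ⊆ Set.range b := fun x hx => by
    rw [hrep] at heF hfσ
    obtain ⟨i, -, rfl⟩ := hF.mem_image_of_toQ_mem heF (hf hx) (hfσ (toQ_mem_coneGen hx))
    exact ⟨i, rfl⟩
  have hdb := hrange hd hsub
  have heb := hrange he le_rfl
  ext x
  by_cases hx : x ∈ Set.range b
  · obtain ⟨i, rfl⟩ := hx
    have hi := congrArg (fun v => b.repr v i) h
    simp only [repr_linearCombination_of_support_subset b hdb,
      repr_linearCombination_of_support_subset b heb, Nat.cast_inj] at hi
    exact hi
  · rw [Finsupp.notMem_support_iff.mp fun h => hx (hdb h),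
      Finsupp.notMem_support_iff.mp fun h => hx (heb h)]

lemma exists_degree_lt_of_coneGen_notMem (hF : IsSmoothCompleteFan F) (hFano : IsFano F)
    {d : LVec n →₀ ℕ} (hd : ↑d.support ⊆ gens F) (hdF : coneGen (toQ '' ↑d.support) ∉ F) :
    ∃ d₁ : LVec n →₀ ℕ, ↑d₁.support ⊆ gens F ∧
      Finsupp.linearCombination ℕ id d₁ = Finsupp.linearCombination ℕ id d ∧
      d₁.degree < d.degree := by
  classical
  obtain ⟨P, hPd, hP⟩ := exists_isPrimCol_subset hd hdF
  obtain ⟨y, hyg, hyF, hy⟩ := hF.exists_linearCombination_eq (∑ x ∈ P, x)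
  -- replace `P` by the right-hand side `y` of its primitive relation
  set p : LVec n →₀ ℕ := ∑ x ∈ P, Finsupp.single x 1
  have hpd : p ≤ d := fun x => by
    simp only [p, Finsupp.finsetSum_apply, Finsupp.single_apply, Finset.sum_ite_eq']
    split_ifs with hx
    · exact Nat.one_le_iff_ne_zero.mpr (Finsupp.mem_support_iff.mp (hPd hx))
    · exact Nat.zero_le _
  have hdp : d = d - p + p := (tsub_add_cancel_of_le hpd).symm
  have hlc_p : Finsupp.linearCombination ℕ id p = ∑ x ∈ P, x := by
    simp [p, map_sum, Finsupp.linearCombination_single]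
  have hdeg_p : p.degree = P.card := by simp [p, map_sum]
  have hdeg_y : y.degree < P.card := by
    have hrel : HasPrimRel F P y.support (fun v => y v) := by
      refine ⟨hyg, hyF, fun v hv => ?_, ?_⟩
      · exact Int.natCast_pos.mpr (Nat.pos_of_ne_zero (Finsupp.mem_support_iff.mp hv))
      · rw [← hy, Finsupp.linearCombination_apply, Finsupp.sum]
        exact Finset.sum_congr rfl fun v _ => (natCast_zsmul _ _).symm
    have := hFano P _ _ hP hrel
    rw [degOf, ← Nat.cast_sum, ← Finsupp.degree_apply] at this
    omega
  refine ⟨d - p + y, fun x hx => ?_, ?_, ?_⟩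
  · rcases Finset.mem_union.mp (Finsupp.support_add hx) with hx | hx
    · exact hd (Finsupp.support_tsub hx)
    · exact hyg hx
  · conv_rhs => rw [hdp]
    rw [map_add, map_add, hy, hlc_p]
  · have h := congrArg Finsupp.degree hdp
    rw [map_add, hdeg_p] at h
    rw [map_add]
    omega

theorem degree_lt_of_linearCombination_eq (hF : IsSmoothCompleteFan F) (hFano : IsFano F)
    {d e : LVec n →₀ ℕ} (hd : ↑d.support ⊆ gens F) (he : ↑e.support ⊆ gens F)
    (heF : coneGen (toQ '' ↑e.support) ∈ F) (hdF : coneGen (toQ '' ↑d.support) ∉ F)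
    (h : Finsupp.linearCombination ℕ id d = Finsupp.linearCombination ℕ id e) :
    e.degree < d.degree := by
  induction hk : d.degree using Nat.strong_induction_on generalizing d with
  | _ k ih =>
  obtain ⟨d₁, hd₁, hlc, hdeg⟩ := hF.exists_degree_lt_of_coneGen_notMem hFano hd hdF
  rw [hk] at hdeg
  by_cases hd₁F : coneGen (toQ '' ↑d₁.support) ∈ F
  · rwa [← hF.eq_of_linearCombination_eq hd₁ he hd₁F heF (hlc.trans h)]
  · exact (ih _ hdeg hd₁ hd₁F (hlc.trans h) rfl).trans hdeg

end IsSmoothCompleteFan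

lemma degMap_eq_degree (r : LVec n →₀ ℚ) : degMap r = r.degree := rfl

lemma degMap_wallRel {U : Finset (LVec n)} {u u' : LVec n} {b : LVec n → ℤ} :
    degMap (Finsupp.single u 1 + Finsupp.single u' 1 - ∑ v ∈ U, Finsupp.single v (b v : ℚ)) =
      2 - ∑ v ∈ U, (b v : ℚ) := by
  simp [degMap_eq_degree, map_sum]
  norm_num

lemma IsWallRel.ne_zero {F : Set (Set (Vec n))} {r : LVec n →₀ ℚ} (hr : IsWallRel F r) :
    r ≠ 0 := by
  obtain ⟨U, u, u', b, -, -, -, -, huU, -, huu', -, -, -, -, rfl⟩ := hr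
  intro h
  have hu := congrArg (· u) h
  have hsum : ∑ v ∈ U, Finsupp.single v (b v : ℚ) u = 0 :=
    Finset.sum_eq_zero fun v hv => Finsupp.single_eq_of_ne fun h => huU (h ▸ hv)
  simp [Finsupp.single_eq_of_ne huu', hsum] at hu

lemma exists_split_of_add_eq_sum {U : Finset (LVec n)} {u u' : LVec n} {b : LVec n → ℤ}
    (hrel : u + u' = ∑ v ∈ U, b v • v) :
    ∃ d e : LVec n →₀ ℕ, d.support ⊆ insert u (insert u' U) ∧ e.support ⊆ U ∧ d u ≠ 0 ∧
      Finsupp.linearCombination ℕ id d = Finsupp.linearCombination ℕ id e ∧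
      (e.degree : ℤ) - d.degree = ∑ v ∈ U, b v - 2 := by
  classical
  refine ⟨Finsupp.single u 1 + Finsupp.single u' 1 + ∑ v ∈ U, Finsupp.single v (-b v).toNat,
    ∑ v ∈ U, Finsupp.single v (b v).toNat, ?_, ?_, by simp, ?_, ?_⟩
  · refine Finsupp.support_add.trans (Finset.union_subset
      (Finsupp.support_add.trans (Finset.union_subset ?_ ?_)) ?_)
    · exact Finsupp.support_single_subset.trans (by simp)
    · exact Finsupp.support_single_subset.trans (by simp)
    · simpa using (Finsupp.support_sum_single_subset U id _).trans
        ((Finset.subset_insert _ _).trans (Finset.subset_insert _ _))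
  · simpa using Finsupp.support_sum_single_subset U id _
  · simp only [map_add, map_sum, Finsupp.linearCombination_single, id, one_smul, hrel,
      ← Finset.sum_add_distrib]
    refine Finset.sum_congr rfl fun v _ => ?_
    rw [← natCast_zsmul, ← natCast_zsmul, ← add_smul]
    congr 1
    omega
  · simp only [map_add, map_sum, Finsupp.degree_single]
    push_cast
    rw [← Finset.sum_congr rfl fun v _ => Int.toNat_sub_toNat_neg (b v), Finset.sum_sub_distrib]
    ring

namespace IsSmoothCompleteFan

variable {F : Set (Set (Vec n))}

theorem degMap_pos_of_isWallRel (hF : IsSmoothCompleteFan F) (hFano : IsFano F)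
    {r : LVec n →₀ ℚ} (hr : IsWallRel F r) : 0 < degMap r := by
  obtain ⟨U, u, u', b, hUg, -, hug, hu'g, huU, -, -, hUF, -, -, hrel, rfl⟩ := hr
  obtain ⟨d, e, hdU, heU, hdu, hlc, hdeg⟩ := exists_split_of_add_eq_sum hrel
  have he : ↑e.support ⊆ gens F := fun x hx => hUg (heU hx)
  have hd : ↑d.support ⊆ gens F := (Finset.coe_subset.mpr hdU).trans (by
    simpa [Set.insert_subset_iff] using ⟨hug, hu'g, hUg⟩)
  have heF : coneGen (toQ '' ↑e.support) ∈ F :=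
    hF.coneGen_mem_of_forall_toQ_mem hUF he fun x hx => toQ_mem_coneGen (heU hx)
  -- the two representations differ at `u`, so they cannot both lie on cones of the fan
  have hdF : coneGen (toQ '' ↑d.support) ∉ F := fun hdF => hdu <| by
    rw [hF.eq_of_linearCombination_eq hd he hdF heF hlc]
    exact Finsupp.notMem_support_iff.mp fun h => huU (heU h)
  have hlt := hF.degree_lt_of_linearCombination_eq hFano hd he heF hdF hlc
  have hsum : ∑ v ∈ U, b v < 2 := by omega
  rw [degMap_wallRel, sub_pos]
  exact_mod_cast hsum

/-- By finiteness, one cone of the fan contains `w + v / (m + 1)` for infinitely many `m`; being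
closed, it contains `w`. -/
lemma exists_mem_add_smul_mem (hF : IsSmoothCompleteFan F) (w v : Vec n) :
    ∃ ρ ∈ F, w ∈ ρ ∧ ∃ t : ℚ, 0 < t ∧ w + t • v ∈ ρ := by
  set q : ℕ → Vec n := fun m => w + (1 / ((m : ℚ) + 1)) • v
  obtain ⟨ρ, hρ, hinf⟩ : ∃ ρ ∈ F, {m | q m ∈ ρ}.Infinite := by
    by_contra! h
    refine Set.infinite_univ ((hF.finite.biUnion fun ρ hρ => h ρ hρ).subset fun m _ => ?_)
    obtain ⟨ρ, hρ, hm⟩ : q m ∈ ⋃₀ F := hF.covers ▸ Set.mem_univ _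
    exact Set.mem_biUnion hρ hm
  refine ⟨ρ, hρ, ?_, ?_⟩
  · obtain ⟨b, I, rfl⟩ := hF.smooth ρ hρ
    have hq : Filter.Tendsto q Filter.atTop (nhds w) := by
      have := (tendsto_const_nhds (x := w)).add
        ((tendsto_one_div_add_atTop_nhds_zero_nat (𝕜 := ℚ)).smul_const v)
      rwa [zero_smul, add_zero] at this
    exact (isClosed_coneGen_basis b I).mem_of_frequently_of_tendsto
      (Nat.frequently_atTop_iff_infinite.mpr hinf) hq
  · obtain ⟨m, hm⟩ := hinf.nonempty
    exact ⟨_, by positivity, hm⟩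

lemma coneGen_basis_subset_of_sum_mem (hF : IsSmoothCompleteFan F)
    {b : Module.Basis (Fin n) ℤ (LVec n)} {I : Finset (Fin n)}
    (hσ : coneGen (toQ '' (⇑b '' ↑I)) ∈ F) {τ : Set (Vec n)} (hτ : τ ∈ F)
    (hmem : ∑ i ∈ I, toQ (b i) ∈ τ) : coneGen (toQ '' (⇑b '' ↑I)) ⊆ τ := by
  rw [← Finset.coe_image] at hσ ⊢
  refine hF.coneGen_subset_of_sum_smul_mem hσ hτ (c := fun _ => 1) (fun _ _ => one_pos) ?_
  rwa [Finset.sum_image fun _ _ _ _ h => b.injective h,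
    Finset.sum_congr rfl fun _ _ => one_smul _ _]

end IsSmoothCompleteFan

def IsChamber (F : Set (Set (Vec n))) (σ : Set (Vec n)) : Prop :=
  σ ∈ F ∧ ∃ b : Module.Basis (Fin n) ℤ (LVec n),
    σ = coneGen (toQ '' (⇑b '' ↑(Finset.univ : Finset (Fin n))))

open Classical in
noncomputable def chamberBasis (σ : Set (Vec n)) : Module.Basis (Fin n) ℤ (LVec n) :=
  if h : ∃ b : Module.Basis (Fin n) ℤ (LVec n),
      σ = coneGen (toQ '' (⇑b '' ↑(Finset.univ : Finset (Fin n)))) then h.choose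
  else Pi.basisFun ℤ (Fin n)

/-- On a chamber `σ`, the anticanonical support function of the fan (linear on `σ`, equal to `1`
on its generators). -/
noncomputable def chamberFun (σ : Set (Vec n)) : Vec n →ₗ[ℚ] ℚ :=
  (qBasis (chamberBasis σ)).sumCoords

lemma chamberFun_toQ_basis (σ : Set (Vec n)) (i : Fin n) :
    chamberFun σ (toQ (chamberBasis σ i)) = 1 :=
  qBasis_sumCoords_toQ_apply _ i

namespace IsChamber

variable {F : Set (Set (Vec n))} {σ : Set (Vec n)}

lemma eq_coneGen (h : IsChamber F σ) :
    σ = coneGen (toQ '' (⇑(chamberBasis σ) '' ↑(Finset.univ : Finset (Fin n)))) := by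
  rw [chamberBasis, dif_pos h.2]
  exact h.2.choose_spec

lemma mem (h : IsChamber F σ) :
    coneGen (toQ '' (⇑(chamberBasis σ) '' ↑(Finset.univ : Finset (Fin n)))) ∈ F :=
  h.eq_coneGen ▸ h.1

lemma mem_iff (h : IsChamber F σ) (z : Vec n) :
    z ∈ σ ↔ ∀ i, 0 ≤ (qBasis (chamberBasis σ)).repr z i := by
  conv_lhs => rw [h.eq_coneGen]
  rw [mem_coneGen_basis_iff]
  simp

lemma basis_mem_gens (hF : IsSmoothCompleteFan F) (h : IsChamber F σ) (i : Fin n) :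
    chamberBasis σ i ∈ gens F :=
  hF.basis_mem_gens h.mem (Finset.mem_univ i)

lemma mem_range_of_toQ_mem (hF : IsSmoothCompleteFan F) (h : IsChamber F σ) {x : LVec n}
    (hx : x ∈ gens F) (hxσ : toQ x ∈ σ) : x ∈ Set.range (chamberBasis σ) := by
  rw [h.eq_coneGen] at hxσ
  obtain ⟨i, -, rfl⟩ := hF.mem_image_of_toQ_mem h.mem hx hxσ
  exact ⟨i, rfl⟩

lemma chamberFun_toQ_of_mem (hF : IsSmoothCompleteFan F) (h : IsChamber F σ) {x : LVec n}
    (hx : x ∈ gens F) (hxσ : toQ x ∈ σ) : chamberFun σ (toQ x) = 1 := by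
  obtain ⟨i, rfl⟩ := h.mem_range_of_toQ_mem hF hx hxσ
  exact chamberFun_toQ_basis σ i

lemma chamberFun_eq_of_mem_subset (hF : IsSmoothCompleteFan F) (h : IsChamber F σ)
    {b : Module.Basis (Fin n) ℤ (LVec n)} {J : Finset (Fin n)}
    (hρ : coneGen (toQ '' (⇑b '' ↑J)) ∈ F) (hρσ : coneGen (toQ '' (⇑b '' ↑J)) ⊆ σ) {z : Vec n}
    (hz : z ∈ coneGen (toQ '' (⇑b '' ↑J))) :
    chamberFun σ z = ∑ j ∈ J, (qBasis b).repr z j := by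
  conv_lhs => rw [← sum_repr_smul_eq_of_mem_coneGen b hz]
  simp only [map_sum, map_smul, smul_eq_mul]
  refine Finset.sum_congr rfl fun j hj => ?_
  rw [h.chamberFun_toQ_of_mem hF (hF.basis_mem_gens hρ hj)
    (hρσ (subset_coneGen _ ⟨b j, ⟨j, hj, rfl⟩, rfl⟩)), mul_one]

lemma chamberFun_eq_of_mem_inter (hF : IsSmoothCompleteFan F) (hσ : IsChamber F σ)
    {τ : Set (Vec n)} (hτ : IsChamber F τ) {z : Vec n} (hzσ : z ∈ σ) (hzτ : z ∈ τ) :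
    chamberFun σ z = chamberFun τ z := by
  have hρ : σ ∩ τ ∈ F := hF.faces σ hσ.1 _ (hF.inter σ hσ.1 τ hτ.1).1
  obtain ⟨b, J, hrep⟩ := hF.smooth _ hρ
  rw [hrep] at hρ
  have hz : z ∈ coneGen (toQ '' (⇑b '' ↑J)) := hrep ▸ ⟨hzσ, hzτ⟩
  rw [hσ.chamberFun_eq_of_mem_subset hF hρ (hrep ▸ Set.inter_subset_left) hz,
    hτ.chamberFun_eq_of_mem_subset hF hρ (hrep ▸ Set.inter_subset_right) hz]

end IsChamber

namespace IsSmoothCompleteFan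

variable {F : Set (Set (Vec n))}

lemma exists_isChamber_superset (hF : IsSmoothCompleteFan F) {σ : Set (Vec n)} (hσ : σ ∈ F) :
    ∃ τ, IsChamber F τ ∧ σ ⊆ τ := by
  obtain ⟨ρ, ⟨hρF, hσρ⟩, hmax⟩ :=
    (hF.finite.subset (Set.sep_subset F (σ ⊆ ·))).exists_maximal ⟨σ, hσ, subset_rfl⟩
  obtain ⟨b, I, rfl⟩ := hF.smooth ρ hρF
  by_cases hI : I = Finset.univ
  · exact ⟨_, ⟨hρF, b, hI ▸ rfl⟩, hσρ⟩
  -- otherwise the maximal cone `ρ` could be enlarged in the direction of a missing `b j`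
  obtain ⟨j, hj⟩ := not_forall.mp (mt Finset.eq_univ_iff_forall.mpr hI)
  obtain ⟨ρ', hρ', hw, t, ht, hwt⟩ :=
    hF.exists_mem_add_smul_mem (∑ i ∈ I, toQ (b i)) (toQ (b j))
  have hsub := hF.coneGen_basis_subset_of_sum_mem hρF hρ' hw
  have hcoord :=
    ((mem_coneGen_basis_iff b I _).mp (hmax ⟨hρ', hσρ.trans hsub⟩ hsub hwt)).2 j hj
  simp [← qBasis_apply, map_sum, Finsupp.single_apply, hj] at hcoord
  exact (ht.ne' hcoord).elim

end IsSmoothCompleteFan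

namespace IsChamber

variable {F : Set (Set (Vec n))} {σ : Set (Vec n)}

lemma repr_eq_neg_one_of_image_erase_eq {σ' : Set (Vec n)} (hσ' : IsChamber F σ') {i j : Fin n}
    (hj : (Finset.univ.erase j).image (chamberBasis σ') =
      (Finset.univ.erase i).image (chamberBasis σ))
    {q : Vec n} (hq : q ∈ σ') (hqi : (qBasis (chamberBasis σ)).repr q i < 0) :
    (chamberBasis σ).repr (chamberBasis σ' j) i = -1 := by
  set b := chamberBasis σ
  set β := chamberBasis σ'
  have hzero (j' : Fin n) (hj' : j' ≠ j) : b.repr (β j') i = 0 := by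
    have : β j' ∈ (Finset.univ.erase i).image b :=
      hj ▸ Finset.mem_image_of_mem β (Finset.mem_erase.mpr ⟨hj', Finset.mem_univ _⟩)
    obtain ⟨k, hk, hkj⟩ := Finset.mem_image.mp this
    rw [← hkj, b.repr_self, Finsupp.single_apply, if_neg (Finset.ne_of_mem_erase hk)]
  -- `b i` and `β j` are exchanged by a unimodular change of basis, so the coordinate is a unit
  have hunit : IsUnit (b.repr (β j) i) := by
    have := b.repr_apply_eq_mul_of_repr_eq_zero β hzero (b i)
    rw [b.repr_self, Finsupp.single_eq_same] at this
    exact IsUnit.of_mul_eq_one_right _ this.symm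
  have hneg : (b.repr (β j) i : ℚ) < 0 := by
    have hqi' := (qBasis b).repr_apply_eq_mul_of_repr_eq_zero (qBasis β) (i := i) (j := j)
      (fun j' hj' => by rw [qBasis_apply, qBasis_repr_toQ, hzero j' hj', Int.cast_zero]) q
    rw [qBasis_apply, qBasis_repr_toQ] at hqi'
    have hs := (hσ'.mem_iff q).mp hq j
    nlinarith
  rcases Int.isUnit_iff.mp hunit with h | h
  · rw [h] at hneg
    norm_num at hneg
  · exact h

lemma exists_adjacent (hF : IsSmoothCompleteFan F) (hσ : IsChamber F σ) (i : Fin n) :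
    ∃ σ', IsChamber F σ' ∧ ∃ j,
      (Finset.univ.erase j).image (chamberBasis σ') = (Finset.univ.erase i).image (chamberBasis σ) ∧
      (chamberBasis σ).repr (chamberBasis σ' j) i = -1 := by
  classical
  set b := chamberBasis σ
  have hfacet : coneGen (toQ '' (⇑b '' ↑(Finset.univ.erase i))) ∈ F :=
    hF.coneGen_basis_mem_of_subset hσ.mem (Finset.erase_subset _ _)
  obtain ⟨ρ, hρ, hw, t, ht, hwt⟩ :=
    hF.exists_mem_add_smul_mem (∑ k ∈ Finset.univ.erase i, toQ (b k)) (-toQ (b i))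
  have hfacetρ := hF.coneGen_basis_subset_of_sum_mem hfacet hρ hw
  obtain ⟨σ', hσ', hρσ'⟩ := hF.exists_isChamber_superset hρ
  have hsub : (Finset.univ.erase i).image b ⊆ Finset.univ.image (chamberBasis σ') :=
    fun x hx => by
      obtain ⟨k, hk, rfl⟩ := Finset.mem_image.mp hx
      obtain ⟨j, hj⟩ := hσ'.mem_range_of_toQ_mem hF (hσ.basis_mem_gens hF k)
        (hρσ' (hfacetρ (subset_coneGen _ ⟨b k, ⟨k, hk, rfl⟩, rfl⟩)))
      exact hj ▸ Finset.mem_image_of_mem _ (Finset.mem_univ j)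
  obtain ⟨j, hj⟩ := Finset.exists_image_erase_eq b.injective (chamberBasis σ').injective hsub
  have hqi : (qBasis b).repr (∑ k ∈ Finset.univ.erase i, toQ (b k) + t • -toQ (b i)) i < 0 := by
    simpa [← qBasis_apply, map_sum, Finsupp.single_apply] using ht
  exact ⟨σ', hσ', j, hj, hσ'.repr_eq_neg_one_of_image_erase_eq hj (hρσ' hwt) hqi⟩

variable {σ' : Set (Vec n)} {i j : Fin n}

lemma chamberFun_toQ_basis_of_ne (hj : (Finset.univ.erase j).image (chamberBasis σ') =
      (Finset.univ.erase i).image (chamberBasis σ)) {k : Fin n} (hk : k ≠ i) :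
    chamberFun σ' (toQ (chamberBasis σ k)) = 1 := by
  have : chamberBasis σ k ∈ (Finset.univ.erase j).image (chamberBasis σ') :=
    hj ▸ Finset.mem_image_of_mem _ (Finset.mem_erase.mpr ⟨hk, Finset.mem_univ k⟩)
  obtain ⟨j', -, hj'⟩ := Finset.mem_image.mp this
  rw [← hj']
  exact chamberFun_toQ_basis σ' j'

lemma chamberFun_toQ_basis_eq (hj : (Finset.univ.erase j).image (chamberBasis σ') =
      (Finset.univ.erase i).image (chamberBasis σ))
    (hr : (chamberBasis σ).repr (chamberBasis σ' j) i = -1) :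
    chamberFun σ' (toQ (chamberBasis σ i)) =
      ∑ k ∈ Finset.univ.erase i, ((chamberBasis σ).repr (chamberBasis σ' j) k : ℚ) - 1 := by
  classical
  have hrel := congrArg (chamberFun σ' ∘ toQ)
    ((chamberBasis σ).add_eq_sum_erase_of_repr_eq_neg_one hr)
  simp only [Function.comp_apply, toQ_add, toQ_sum, toQ_zsmul, map_add, map_sum, map_smul,
    smul_eq_mul, chamberFun_toQ_basis] at hrel
  rw [Finset.sum_congr rfl fun k hk =>
    by rw [chamberFun_toQ_basis_of_ne hj (Finset.ne_of_mem_erase hk), mul_one]] at hrel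
  rw [← hrel]
  ring

lemma exists_isWallRel_degMap_eq (hF : IsSmoothCompleteFan F) (hσ : IsChamber F σ)
    (hσ' : IsChamber F σ') (hj : (Finset.univ.erase j).image (chamberBasis σ') =
      (Finset.univ.erase i).image (chamberBasis σ))
    (hr : (chamberBasis σ).repr (chamberBasis σ' j) i = -1) :
    ∃ r, IsWallRel F r ∧ degMap r =
      2 - ∑ k ∈ Finset.univ.erase i, ((chamberBasis σ).repr (chamberBasis σ' j) k : ℚ) := by
  classical
  set b := chamberBasis σ
  set β := chamberBasis σ'
  set U := (Finset.univ.erase i).image b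
  have hUg : ↑U ⊆ gens F := fun x hx => by
    obtain ⟨k, -, rfl⟩ := Finset.mem_image.mp hx
    exact hσ.basis_mem_gens hF k
  have hiU : b i ∉ U := by simp [U, b.injective.eq_iff]
  have hjU : β j ∉ U := by simp [U, ← hj, β.injective.eq_iff]
  have hij : b i ≠ β j := fun h => by
    rw [← h, b.repr_self, Finsupp.single_eq_same] at hr
    norm_num at hr
  have hUF : coneGen (toQ '' ↑U) ∈ F := by
    rw [Finset.coe_image]
    exact hF.coneGen_basis_mem_of_subset hσ.mem (Finset.erase_subset _ _)
  have hiUF : coneGen (toQ '' ↑(insert (b i) U)) ∈ F := by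
    rw [← Finset.image_insert, Finset.insert_erase (Finset.mem_univ i), Finset.coe_image]
    exact hσ.mem
  have hjUF : coneGen (toQ '' ↑(insert (β j) U)) ∈ F := by
    rw [← hj, ← Finset.image_insert, Finset.insert_erase (Finset.mem_univ j), Finset.coe_image]
    exact hσ'.mem
  have hcard : U.card = n - 1 := by
    rw [Finset.card_image_of_injective _ b.injective,
      Finset.card_erase_of_mem (Finset.mem_univ i), Finset.card_univ, Fintype.card_fin]
  refine ⟨_, ⟨U, b i, β j, Function.extend b (b.repr (β j)) 0, hUg, hcard,
    hσ.basis_mem_gens hF i, hσ'.basis_mem_gens hF j, hiU, hjU, hij, hUF, hiUF, hjUF, ?_, rfl⟩, ?_⟩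
  · exact (b.add_eq_sum_erase_of_repr_eq_neg_one hr).trans
      (Finset.sum_image_extend_zero b.injective _ _ fun v k => k • v).symm
  · rw [degMap_wallRel]
    exact congrArg (2 - ·) (Finset.sum_image_extend_zero b.injective _ _ fun _ (k : ℤ) => (k : ℚ))

lemma exists_chamberFun_lt (hF : IsSmoothCompleteFan F)
    (hwall : ∀ r, IsWallRel F r → 0 < degMap r) (hσ : IsChamber F σ) {z : Vec n} (hz : z ∉ σ) :
    ∃ σ', IsChamber F σ' ∧ chamberFun σ z < chamberFun σ' z := by
  classical
  set b := chamberBasis σ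
  obtain ⟨i, hi⟩ : ∃ i, (qBasis b).repr z i < 0 := by simpa [hσ.mem_iff] using hz
  obtain ⟨σ', hσ', j, hj, hr⟩ := hσ.exists_adjacent hF i
  obtain ⟨r, hr_wall, hr_deg⟩ := hσ.exists_isWallRel_degMap_eq hF hσ' hj hr
  have hle : chamberFun σ' (toQ (b i)) ≤ 0 := by
    have hpos := hwall r hr_wall
    rw [hr_deg, sub_pos] at hpos
    have hint : ∑ k ∈ Finset.univ.erase i, b.repr (chamberBasis σ' j) k ≤ 1 := by
      have : ∑ k ∈ Finset.univ.erase i, b.repr (chamberBasis σ' j) k < 2 := by exact_mod_cast hpos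
      omega
    rw [chamberFun_toQ_basis_eq hj hr, sub_nonpos]
    exact_mod_cast hint
  refine ⟨σ', hσ', ?_⟩
  have hval (f : Vec n →ₗ[ℚ] ℚ) :
      f z = (qBasis b).repr z i * f (toQ (b i)) +
        ∑ k ∈ Finset.univ.erase i, (qBasis b).repr z k * f (toQ (b k)) := by
    conv_lhs => rw [← (qBasis b).sum_repr z]
    simp only [map_sum, map_smul, smul_eq_mul, qBasis_apply]
    exact (Finset.add_sum_erase _ _ (Finset.mem_univ i)).symm
  have hrest : ∑ k ∈ Finset.univ.erase i, (qBasis b).repr z k * chamberFun σ' (toQ (b k)) =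
      ∑ k ∈ Finset.univ.erase i, (qBasis b).repr z k := Finset.sum_congr rfl fun k hk => by
    rw [chamberFun_toQ_basis_of_ne hj (Finset.ne_of_mem_erase hk), mul_one]
  have hσ_one (k : Fin n) : chamberFun σ (toQ (b k)) = 1 := chamberFun_toQ_basis σ k
  rw [hval (chamberFun σ), hval (chamberFun σ'), hrest]
  simp only [hσ_one, mul_one]
  nlinarith [mul_nonneg_of_nonpos_of_nonpos hi.le hle]

lemma chamberFun_le_of_mem (hF : IsSmoothCompleteFan F)
    (hwall : ∀ r, IsWallRel F r → 0 < degMap r) (hσ : IsChamber F σ) {ρ : Set (Vec n)}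
    (hρ : IsChamber F ρ) {z : Vec n} (hz : z ∈ ρ) :
    chamberFun σ z ≤ chamberFun ρ z ∧ (z ∉ σ → chamberFun σ z < chamberFun ρ z) := by
  obtain ⟨τ, hτ, hmax⟩ := Set.exists_max_image {γ | IsChamber F γ} (chamberFun · z)
    (hF.finite.subset fun γ hγ => hγ.1) ⟨σ, hσ⟩
  have hzτ : z ∈ τ := by
    by_contra hzτ
    obtain ⟨τ', hτ', hlt⟩ := hτ.exists_chamberFun_lt hF hwall hzτ
    exact (hmax τ' hτ').not_gt hlt
  rw [← hτ.chamberFun_eq_of_mem_inter hF hρ hzτ hz]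
  refine ⟨hmax σ hσ, fun hzσ => ?_⟩
  obtain ⟨σ', hσ', hlt⟩ := hσ.exists_chamberFun_lt hF hwall hzσ
  exact hlt.trans_le (hmax σ' hσ')

end IsChamber

namespace IsSmoothCompleteFan

variable {F : Set (Set (Vec n))}

theorem isFano_of_forall_isWallRel (hF : IsSmoothCompleteFan F)
    (hwall : ∀ r, IsWallRel F r → 0 < degMap r) : IsFano F := by
  rintro P Y a hP ⟨hYg, hYF, -, hsum⟩
  obtain ⟨τ, hτ, hYτ⟩ := hF.exists_isChamber_superset hYF
  have hgen {x : LVec n} (hx : x ∈ gens F) :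
      chamberFun τ (toQ x) ≤ 1 ∧ (toQ x ∉ τ → chamberFun τ (toQ x) < 1) := by
    obtain ⟨ρ, hρ, hxρ⟩ := hF.exists_isChamber_superset hx.2
    have hxρ' : toQ x ∈ ρ := hxρ (subset_coneGen _ rfl)
    rw [← hρ.chamberFun_toQ_of_mem hF hx hxρ']
    exact hτ.chamberFun_le_of_mem hF hwall hρ hxρ'
  obtain ⟨x₀, hx₀, hx₀τ⟩ : ∃ x ∈ P, toQ x ∉ τ := by
    by_contra! h
    exact hP.2.1 (hF.coneGen_mem_of_forall_toQ_mem hτ.1 hP.1 h)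
  have hY : chamberFun τ (toQ (∑ x ∈ P, x)) = ∑ y ∈ Y, (a y : ℚ) := by
    rw [hsum, toQ_sum, map_sum]
    refine Finset.sum_congr rfl fun y hy => ?_
    rw [toQ_zsmul, map_smul, hτ.chamberFun_toQ_of_mem hF (hYg hy) (hYτ (toQ_mem_coneGen hy)),
      smul_eq_mul, mul_one]
  have hP : chamberFun τ (toQ (∑ x ∈ P, x)) < P.card := by
    rw [toQ_sum, map_sum]
    calc ∑ x ∈ P, chamberFun τ (toQ x) < ∑ _x ∈ P, (1 : ℚ) :=
          Finset.sum_lt_sum (fun x hx => (hgen (hP.1 hx)).1)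
            ⟨x₀, hx₀, (hgen (hP.1 hx₀)).2 hx₀τ⟩
      _ = P.card := by simp
  rw [hY] at hP
  have : ∑ y ∈ Y, a y < P.card := by exact_mod_cast hP
  rw [degOf]
  omega

end IsSmoothCompleteFan

lemma subset_qCone (S : Set (LVec n →₀ ℚ)) : S ⊆ qCone S := by
  classical
  intro s hs
  exact ⟨{s}, fun _ => 1, by simpa using hs, fun _ => zero_le_one, by simp⟩

lemma pos_of_mem_qCone {S : Set (LVec n →₀ ℚ)} (f : (LVec n →₀ ℚ) →+ ℚ) (hS : ∀ s ∈ S, 0 < f s)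
    {r : LVec n →₀ ℚ} (hr : r ∈ qCone S) (hr0 : r ≠ 0) : 0 < f r := by
  obtain ⟨G, c, hG, hc, rfl⟩ := hr
  obtain ⟨w, hw, hcw⟩ : ∃ w ∈ G, c w ≠ 0 := by
    by_contra! h
    exact hr0 (Finset.sum_eq_zero fun w hw => by rw [h w hw, zero_smul])
  rw [map_sum]
  refine Finset.sum_pos' (fun w hw => ?_) ⟨w, hw, ?_⟩
  · rw [map_rat_smul, smul_eq_mul]
    exact mul_nonneg (hc w) (hS w (hG hw)).le
  · rw [map_rat_smul, smul_eq_mul]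
    exact mul_pos ((hc w).lt_of_ne' hcw) (hS w (hG hw))

lemma forall_moriCone_degMap_pos_iff {F : Set (Set (Vec n))} :
    (∀ r ∈ MoriCone F, r ≠ 0 → 0 < degMap r) ↔ ∀ r, IsWallRel F r → 0 < degMap r :=
  ⟨fun h r hr => h r (subset_qCone _ hr) hr.ne_zero,
    fun h _ hr hr0 => pos_of_mem_qCone Finsupp.degree h hr hr0⟩

/-- **Batyrev's characterization of toric Fano varieties** (Proposition 1.5): for a
smooth complete fan `Σ` in `ℤ^n`, the degree linear form `(a_x) ↦ ∑_x a_x`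
(intersection with the anticanonical class) is strictly positive on every nonzero
element of the Mori cone `NE(Σ)` if and only if every primitive collection of `Σ`
has strictly positive degree. -/
theorem fano_iff_deg_positive_on_moriCone {n : ℕ} (F : Set (Set (Vec n)))
    (hF : IsSmoothCompleteFan F) :
    (∀ r ∈ MoriCone F, r ≠ 0 → 0 < degMap r) ↔ IsFano F :=
  forall_moriCone_degMap_pos_iff.trans
    ⟨hF.isFano_of_forall_isWallRel, fun hFano _ => hF.degMap_pos_of_isWallRel hFano⟩
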